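/- Let W = [W1; W2] be an (m+p)×m minimum-phase matrix over K = RatFunc ℂ, where the m×m block W1 is invertible over K, and set H := W2 W1⁻¹. Then the following are equivalent: (i) H is stable, i.e. every entry of H is proper and every pole α of H satisfies |α| ≤ 1; (ii) W1 is minimum-phase. (Theorem 3.2 of the paper: the deterministic relation H is stable if and only if the square block W1 of a minimum-phase factor is minimum-phase.) -/

import Mathlib

/-!
Since `W₁` is invertible, `W = [I; H] W₁` with `H = W₂ W₁⁻¹`. Wherever `H` has no pole
(including at `∞`), evaluation is multiplicative, so `W(α) = [I; H(α)] W₁(α)` and the full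
column rank of `W(α)` forces that of `W₁(α)`. Conversely, where `W₁` has no pole and `W₁(α)` is
invertible, `det W₁` is a unit of the local ring of functions regular at `α`, so `W₁⁻¹` has
no pole there, hence neither has `H = W₂ W₁⁻¹`; outside the closed unit disc and at `∞` this
is exactly what minimum phase of `W₁` provides.
-/

open Matrix

noncomputable section

abbrev K : Type := RatFunc ℂ

/-- `α` is a pole of `q`: a root of the denominator of `q` in lowest terms. -/
def IsPole (α : ℂ) (q : K) : Prop := Polynomial.eval α (RatFunc.denom q) = 0

/-- `α` is a pole of a matrix if it is a pole of some entry. -/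
def MIsPole {I J : Type} (α : ℂ) (W : Matrix I J K) : Prop := ∃ i j, IsPole α (W i j)

/-- Evaluation of a rational function at a point. -/
def evalAt (α : ℂ) (q : K) : ℂ := RatFunc.eval (RingHom.id ℂ) α q

/-- Entrywise evaluation of a matrix of rational functions. -/
def MEval {I J : Type} (α : ℂ) (W : Matrix I J K) : Matrix I J ℂ := W.map (evalAt α)

/-- `W*`: the transpose of the entrywise application of `σ`. -/
def paraStar {I J : Type} (σ : K →+* K) (W : Matrix I J K) : Matrix J I K := (W.map σ)ᵀ

/-- `q` is proper: `0` is not a pole of `τ q` (where `τ` maps `X` to `X⁻¹`). -/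
def Proper (τ : K →+* K) (q : K) : Prop := ¬ IsPole 0 (τ q)

/-- Discrete-time minimum phase: entries proper, all poles strictly inside the unit
circle, full column rank at every point outside the closed unit disc and at infinity. -/
def MinPhaseD (τ : K →+* K) {n m : Type} [Fintype n] [Fintype m]
    (W : Matrix n m K) : Prop :=
  (∀ i j, Proper τ (W i j)) ∧
  (∀ α : ℂ, MIsPole α W → ‖α‖ < 1) ∧
  (∀ α : ℂ, 1 < ‖α‖ → (MEval α W).rank = Fintype.card m) ∧
  (MEval 0 (W.map τ)).rank = Fintype.card m

theorem RingHom.map_nonsing_inv {R S : Type*} [CommRing R] [CommRing S] {n : Type*} [Fintype n]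
    [DecidableEq n] (f : R →+* S) {A : Matrix n n R} (h : IsUnit A.det) :
    A⁻¹.map f = (A.map f)⁻¹ :=
  (inv_eq_right_inv (by
    rw [← Matrix.map_mul, mul_nonsing_inv A h, Matrix.map_one f (map_zero f) (map_one f)])).symm

theorem Matrix.isUnit_det_of_rank_eq_card {F : Type*} [Field F] {n : Type*} [Fintype n]
    [DecidableEq n] {A : Matrix n n F} (h : A.rank = Fintype.card n) : IsUnit A.det := by
  rw [← isUnit_iff_isUnit_det, ← mulVec_surjective_iff_isUnit]
  have hrange : LinearMap.range A.mulVecLin = ⊤ :=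
    Submodule.eq_top_of_finrank_eq (by rw [Module.finrank_fintype_fun_eq_card]; exact h)
  exact LinearMap.range_eq_top.1 hrange

theorem Matrix.rank_eq_card_of_rank_fromRows_mul {R : Type*} [CommRing R] [StrongRankCondition R]
    {m n p : Type*} [Fintype m] [Fintype n] [DecidableEq m]
    (A : Matrix m n R) (C : Matrix p m R) (h : (fromRows A (C * A)).rank = Fintype.card n) :
    A.rank = Fintype.card n := by
  refine le_antisymm A.rank_le_card_width ?_
  calc Fintype.card n = (fromRows 1 C * A).rank := by rw [fromRows_mul, Matrix.one_mul, h]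
    _ ≤ A.rank := rank_mul_le_right _ _

section RegularAt

variable {α : ℂ}

theorem not_isPole_of_denom_dvd {q : K} {d : Polynomial ℂ} (hd : q.denom ∣ d)
    (h : d.eval α ≠ 0) : ¬ IsPole α q :=
  ne_zero_of_dvd_ne_zero h (Polynomial.eval_dvd hd)

variable (α) in
def regularAt : Subring K :=
  Subsemiring.toSubring
    { carrier := {q | ¬ IsPole α q}
      zero_mem' := by simp [IsPole]
      one_mem' := by simp [IsPole]
      add_mem' := fun {a b} ha hb => not_isPole_of_denom_dvd (RatFunc.denom_add_dvd a b)
        (by rw [Polynomial.eval_mul]; exact mul_ne_zero ha hb)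
      mul_mem' := fun {a b} ha hb => not_isPole_of_denom_dvd (RatFunc.denom_mul_dvd a b)
        (by rw [Polynomial.eval_mul]; exact mul_ne_zero ha hb) }
    (by
      show ¬ IsPole α (-1)
      rw [IsPole, ← map_one (algebraMap (Polynomial ℂ) K), ← map_neg, RatFunc.denom_algebraMap]
      simp)

theorem mem_regularAt {q : K} : q ∈ regularAt α ↔ ¬ IsPole α q := Iff.rfl

variable (α) in
def evalRingHom : regularAt α →+* ℂ where
  toFun q := evalAt α q
  map_one' := RatFunc.eval_one _ _
  map_zero' := RatFunc.eval_zero _ _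
  map_add' x y := RatFunc.eval_add (f := RingHom.id ℂ) (a := α) x.2 y.2
  map_mul' x y := RatFunc.eval_mul (f := RingHom.id ℂ) (a := α) x.2 y.2

theorem inv_mem_regularAt {q : K} (h : evalAt α q ≠ 0) : q⁻¹ ∈ regularAt α := by
  have hq : q ≠ 0 := by rintro rfl; exact h (RatFunc.eval_zero _ _)
  have hnum : q.num.eval α ≠ 0 := fun h0 => h <| by
    change q.num.eval α / q.denom.eval α = 0
    rw [h0, zero_div]
  exact not_isPole_of_denom_dvd (RatFunc.denom_inv_dvd hq) hnum

theorem isUnit_of_evalRingHom_ne_zero {q : regularAt α} (h : evalRingHom α q ≠ 0) :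
    IsUnit q := by
  change evalAt α q ≠ 0 at h
  have hq : (q : K) ≠ 0 := fun h0 => h (by rw [h0]; exact RatFunc.eval_zero _ _)
  exact isUnit_iff_exists_inv.2 ⟨⟨q⁻¹, inv_mem_regularAt h⟩, Subtype.ext (mul_inv_cancel₀ hq)⟩

end RegularAt

section MatrixPoles

variable {α : ℂ} {I J L : Type}

theorem not_mIsPole_iff {A : Matrix I J K} : ¬ MIsPole α A ↔ ∀ i j, A i j ∈ regularAt α := by
  simp [MIsPole, mem_regularAt]

theorem not_mIsPole_iff_exists_map_subtype {A : Matrix I J K} :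
    ¬ MIsPole α A ↔ ∃ B : Matrix I J (regularAt α), B.map (regularAt α).subtype = A :=
  ⟨fun h => ⟨of fun i j => ⟨A i j, not_mIsPole_iff.1 h i j⟩, rfl⟩,
    fun ⟨B, hB⟩ => hB ▸ not_mIsPole_iff.2 fun i j => (B i j).2⟩

theorem MEval_map_subtype (B : Matrix I J (regularAt α)) :
    MEval α (B.map (regularAt α).subtype) = B.map (evalRingHom α) := rfl

theorem mIsPole_fromRows_iff {I₁ I₂ : Type} {A : Matrix I₁ J K} {B : Matrix I₂ J K} :
    MIsPole α (fromRows A B) ↔ MIsPole α A ∨ MIsPole α B := by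
  simp [MIsPole, Sum.exists]

theorem MEval_fromRows {I₁ I₂ : Type} (A : Matrix I₁ J K) (B : Matrix I₂ J K) :
    MEval α (fromRows A B) = fromRows (MEval α A) (MEval α B) :=
  fromRows_map A B _

variable [Fintype L]

theorem not_mIsPole_mul {A : Matrix I L K} {B : Matrix L J K} (hA : ¬ MIsPole α A)
    (hB : ¬ MIsPole α B) : ¬ MIsPole α (A * B) := by
  obtain ⟨A', rfl⟩ := not_mIsPole_iff_exists_map_subtype.1 hA
  obtain ⟨B', rfl⟩ := not_mIsPole_iff_exists_map_subtype.1 hB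
  rw [← Matrix.map_mul]
  exact not_mIsPole_iff_exists_map_subtype.2 ⟨_, rfl⟩

theorem MEval_mul {A : Matrix I L K} {B : Matrix L J K} (hA : ¬ MIsPole α A)
    (hB : ¬ MIsPole α B) : MEval α (A * B) = MEval α A * MEval α B := by
  obtain ⟨A', rfl⟩ := not_mIsPole_iff_exists_map_subtype.1 hA
  obtain ⟨B', rfl⟩ := not_mIsPole_iff_exists_map_subtype.1 hB
  rw [← Matrix.map_mul, MEval_map_subtype, MEval_map_subtype, MEval_map_subtype, Matrix.map_mul]

theorem not_mIsPole_inv [DecidableEq L] {A : Matrix L L K} (hA : ¬ MIsPole α A)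
    (hdet : IsUnit (MEval α A).det) : ¬ MIsPole α A⁻¹ := by
  obtain ⟨A', rfl⟩ := not_mIsPole_iff_exists_map_subtype.1 hA
  rw [MEval_map_subtype, ← RingHom.mapMatrix_apply, ← RingHom.map_det] at hdet
  rw [← RingHom.map_nonsing_inv _ (isUnit_of_evalRingHom_ne_zero hdet.ne_zero)]
  exact not_mIsPole_iff_exists_map_subtype.2 ⟨_, rfl⟩

theorem not_mIsPole_mul_inv [DecidableEq L] {A : Matrix L L K} {B : Matrix I L K}
    (hA : ¬ MIsPole α A) (hB : ¬ MIsPole α B) (hrank : (MEval α A).rank = Fintype.card L) :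
    ¬ MIsPole α (B * A⁻¹) :=
  not_mIsPole_mul hB (not_mIsPole_inv hA (isUnit_det_of_rank_eq_card hrank))

theorem rank_MEval_eq_card_of_fromRows_mul [Fintype J] [DecidableEq L]
    {A : Matrix L J K} {H : Matrix I L K} (hA : ¬ MIsPole α A) (hH : ¬ MIsPole α H)
    (h : (MEval α (fromRows A (H * A))).rank = Fintype.card J) :
    (MEval α A).rank = Fintype.card J := by
  rw [MEval_fromRows, MEval_mul hH hA] at h
  exact rank_eq_card_of_rank_fromRows_mul _ _ h

end MatrixPoles

theorem forall_proper_iff (τ : K →+* K) {I J : Type} (W : Matrix I J K) :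
    (∀ i j, Proper τ (W i j)) ↔ ¬ MIsPole 0 (W.map τ) := by
  simp [Proper, MIsPole]

theorem H_stable_iff_W1_minimum_phase_general (m p : ℕ)
    (τ : K →+* K)
    (W1 : Matrix (Fin m) (Fin m) K) (W2 : Matrix (Fin p) (Fin m) K)
    (hW1 : IsUnit W1.det)
    (hWmp : MinPhaseD τ (Matrix.fromRows W1 W2)) :
    ((∀ i j, Proper τ ((W2 * W1⁻¹) i j)) ∧
      (∀ α : ℂ, MIsPole α (W2 * W1⁻¹) → ‖α‖ ≤ 1))
    ↔ MinPhaseD τ W1 := by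
  obtain ⟨hprop, hpole, hrank, hinf⟩ := hWmp
  set H := W2 * W1⁻¹
  have hW2 : W2 = H * W1 := (nonsing_inv_mul_cancel_right W1 W2 hW1).symm
  rw [forall_proper_iff, fromRows_map, mIsPole_fromRows_iff, not_or] at hprop
  have hreg (α : ℂ) (hα : 1 ≤ ‖α‖) : ¬ MIsPole α W1 ∧ ¬ MIsPole α W2 := by
    rw [← not_or, ← mIsPole_fromRows_iff]
    exact fun h => (hpole α h).not_ge hα
  constructor
  · rintro ⟨hHprop, hHpole⟩
    rw [forall_proper_iff] at hHprop
    refine ⟨(forall_proper_iff τ W1).2 hprop.1,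
      fun α h => hpole α (mIsPole_fromRows_iff.2 (.inl h)), fun α hα => ?_, ?_⟩
    · rw [hW2] at hrank
      exact rank_MEval_eq_card_of_fromRows_mul (hreg α hα.le).1
        (fun h => (hHpole α h).not_gt hα) (hrank α hα)
    · rw [fromRows_map, hW2, Matrix.map_mul] at hinf
      exact rank_MEval_eq_card_of_fromRows_mul hprop.1 hHprop hinf
  · rintro ⟨-, -, h1rank, h1inf⟩
    refine ⟨?_, fun α hα => ?_⟩
    · rw [forall_proper_iff, Matrix.map_mul, RingHom.map_nonsing_inv τ hW1]
      exact not_mIsPole_mul_inv hprop.1 hprop.2 h1inf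
    · by_contra! hgt
      exact not_mIsPole_mul_inv (hreg α hgt.le).1 (hreg α hgt.le).2 (h1rank α hgt) hα

theorem H_stable_iff_W1_minimum_phase (m p : ℕ)
    (σ : K →+* K)
    (hσC : ∀ c : ℂ, σ (RatFunc.C c) = RatFunc.C ((starRingEnd ℂ) c))
    (hσX : σ RatFunc.X = RatFunc.X⁻¹)
    (τ : K →+* K)
    (hτC : ∀ c : ℂ, τ (RatFunc.C c) = RatFunc.C c)
    (hτX : τ RatFunc.X = RatFunc.X⁻¹)
    (W1 : Matrix (Fin m) (Fin m) K) (W2 : Matrix (Fin p) (Fin m) K)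
    (hW1 : IsUnit W1.det)
    (hWmp : MinPhaseD τ (Matrix.fromRows W1 W2)) :
    ((∀ i j, Proper τ ((W2 * W1⁻¹) i j)) ∧
      (∀ α : ℂ, MIsPole α (W2 * W1⁻¹) → ‖α‖ ≤ 1))
    ↔ MinPhaseD τ W1 :=
  H_stable_iff_W1_minimum_phase_general m p τ W1 W2 hW1 hWmp
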